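/- arXiv:2308.07698 — 4 statements merged into one kernel-verified Lean document; each statement's English description precedes it below -/
import Mathlib

section
/- For any multiset A of positive integers, the derivative of f_{A,n}(x) satisfies f_{A,n}'(x) = ∑_{j=1}^{n} (σ_A(j)/j) f_{A,n-j}(x) for all n ≥ 1. -/
open scoped Classical

/-- Sum of those divisors of `j` that belong to the multiset of positive integers
with multiplicity function `μ`, counted with multiplicity: `σ_A(j) = ∑_{d ∣ j} d·μ(d)`. -/
noncomputable def sigmaA (μ : ℕ → ℕ) (j : ℕ) : ℕ := ∑ d ∈ Nat.divisors j, d * μ d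

/-- The polynomials `f_{A,n}(x)` associated with the multiset of positive integers
with multiplicity function `μ`, defined (equivalently to the generating function
`∑ f_{A,n}(x) qⁿ = ∏_{a∈A} (1/(1-q^a))^x`) by `f_{A,0} = 1` and the recurrence
`f_{A,n}(x) = (x/n) ∑_{j=1}^{n} σ_A(j) f_{A,n-j}(x)`. -/
noncomputable def fA (μ : ℕ → ℕ) : ℕ → ℝ → ℝ
  | 0, _ => 1
  | n + 1, x =>
      x / (n + 1) * ∑ j ∈ Finset.range (n + 1), (sigmaA μ (j + 1) : ℝ) * fA μ (n - j) x
  decreasing_by exact Nat.lt_succ_of_le (Nat.sub_le n j)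

/-- `f_{A,n}(x)` for an ordinary set `A` of positive integers. -/
noncomputable def fS (A : Set ℕ) : ℕ → ℝ → ℝ := fA (fun a => if a ∈ A then 1 else 0)

/-!
Differentiating the recurrence `n f_n = x ∑_{j=1}^n σ(j) f_{n-j}` gives
`n f_n' = ∑_j σ(j) f_{n-j} + x ∑_j σ(j) f_{n-j}'`. By strong induction the claimed formula may
be inserted for the `f_{n-j}'`; swapping the resulting double sum and applying the recurrence
once more to the inner sum turns `x ∑_j σ(j) f_{n-j}'` into `∑_j (σ(j)/j) (n - j) f_{n-j}`,
and adding `∑_j σ(j) f_{n-j}` yields `n ∑_j (σ(j)/j) f_{n-j}`.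
-/

open Finset

theorem Finset.sum_Icc_sum_Icc_sub_comm {M : Type*} [AddCommMonoid M] (N : ℕ) (G : ℕ → ℕ → M) :
    ∑ j ∈ Icc 1 N, ∑ i ∈ Icc 1 (N - j), G j i = ∑ j ∈ Icc 1 N, ∑ i ∈ Icc 1 (N - j), G i j := by
  have h_filter (F : ℕ → ℕ → M) : ∑ j ∈ Icc 1 N, ∑ i ∈ Icc 1 (N - j), F j i
      = ∑ j ∈ Icc 1 N, ∑ i ∈ Icc 1 N with j + i ≤ N, F j i := by
    refine sum_congr rfl fun j hj => sum_congr ?_ fun _ _ => rfl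
    ext i
    simp only [mem_filter, mem_Icc] at hj ⊢
    omega
  rw [h_filter, h_filter, sum_comm' (t' := Icc 1 N) (s' := fun i => {j ∈ Icc 1 N | j + i ≤ N})]
  · simp only [add_comm]
  · simp only [mem_filter, mem_Icc]
    omega

namespace fA

variable (μ : ℕ → ℕ)

theorem zero (x : ℝ) : fA μ 0 x = 1 := by
  rw [fA]

theorem natCast_mul (n : ℕ) (x : ℝ) :
    (n : ℝ) * fA μ n x = x * ∑ j ∈ Icc 1 n, (sigmaA μ j : ℝ) * fA μ (n - j) x := by
  cases n with
  | zero => simp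
  | succ n =>
    rw [fA, ← Ico_add_one_right_eq_Icc, sum_Ico_eq_sum_range]
    push_cast
    field_simp
    refine congrArg (x * ·) (sum_congr rfl fun j _ => ?_)
    rw [add_comm 1 j, Nat.add_sub_add_right]

noncomputable def derivFormula (n : ℕ) (x : ℝ) : ℝ :=
  ∑ j ∈ Icc 1 n, (sigmaA μ j : ℝ) / j * fA μ (n - j) x

theorem natCast_mul_derivFormula (n : ℕ) (x : ℝ) :
    (n : ℝ) * derivFormula μ n x = ∑ j ∈ Icc 1 n, (sigmaA μ j : ℝ) * fA μ (n - j) x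
      + x * ∑ j ∈ Icc 1 n, (sigmaA μ j : ℝ) * derivFormula μ (n - j) x := by
  have h_swap : x * ∑ j ∈ Icc 1 n, (sigmaA μ j : ℝ) * derivFormula μ (n - j) x
      = ∑ j ∈ Icc 1 n, (sigmaA μ j : ℝ) / j * ((n - j : ℕ) * fA μ (n - j) x) := by
    calc x * ∑ j ∈ Icc 1 n, (sigmaA μ j : ℝ) * derivFormula μ (n - j) x
        = ∑ j ∈ Icc 1 n, ∑ i ∈ Icc 1 (n - j),
            x * (sigmaA μ j : ℝ) * ((sigmaA μ i : ℝ) / i * fA μ (n - j - i) x) := by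
          simp only [derivFormula, mul_sum, mul_assoc]
      _ = ∑ j ∈ Icc 1 n, ∑ i ∈ Icc 1 (n - j),
            x * (sigmaA μ i : ℝ) * ((sigmaA μ j : ℝ) / j * fA μ (n - i - j) x) :=
          sum_Icc_sum_Icc_sub_comm n _
      _ = ∑ j ∈ Icc 1 n, (sigmaA μ j : ℝ) / j *
            (x * ∑ i ∈ Icc 1 (n - j), (sigmaA μ i : ℝ) * fA μ (n - j - i) x) := by
          refine sum_congr rfl fun j _ => ?_
          rw [mul_sum, mul_sum]
          refine sum_congr rfl fun i _ => ?_
          rw [Nat.sub_right_comm]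
          ring
      _ = _ := by simp only [natCast_mul]
  rw [h_swap, derivFormula, mul_sum, ← sum_add_distrib]
  refine sum_congr rfl fun j hj => ?_
  obtain ⟨hj1, hjn⟩ := mem_Icc.mp hj
  have hj0 : (j : ℝ) ≠ 0 := by positivity
  rw [Nat.cast_sub hjn]
  field_simp
  ring

theorem hasDerivAt (n : ℕ) (x : ℝ) : HasDerivAt (fA μ n) (derivFormula μ n x) x := by
  induction n using Nat.strong_induction_on generalizing x with
  | _ n ih =>
  rcases Nat.eq_zero_or_pos n with rfl | hn
  · have h_const : fA μ 0 = fun _ => 1 := funext (zero μ)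
    simpa [h_const, derivFormula] using hasDerivAt_const x (1 : ℝ)
  have hn0 : (n : ℝ) ≠ 0 := by positivity
  have h_fun : fA μ n = fun y => y * (∑ j ∈ Icc 1 n, (sigmaA μ j : ℝ) * fA μ (n - j) y) / n :=
    funext fun y => by rw [← natCast_mul]; field_simp
  have h_sum : HasDerivAt (fun y => ∑ j ∈ Icc 1 n, (sigmaA μ j : ℝ) * fA μ (n - j) y)
      (∑ j ∈ Icc 1 n, (sigmaA μ j : ℝ) * derivFormula μ (n - j) x) x :=
    HasDerivAt.fun_sum fun j hj => (ih (n - j) (by grind) x).const_mul _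
  rw [h_fun]
  refine (((hasDerivAt_id' x).mul h_sum).div_const (n : ℝ)).congr_deriv ?_
  rw [div_eq_iff hn0, mul_comm _ (n : ℝ), natCast_mul_derivFormula, one_mul]

end fA

theorem stmt_3_general (μ : ℕ → ℕ) (n : ℕ) (x : ℝ) :
    deriv (fA μ n) x = ∑ j ∈ Finset.Icc 1 n, (sigmaA μ j : ℝ) / j * fA μ (n - j) x :=
  (fA.hasDerivAt μ n x).deriv

/-- The derivative formula f_{A,n}'(x) = sum_{j=1}^{n} (sigma_A(j)/j) f_{A,n-j}(x) for any multiset A of positive integers and all n >= 1. -/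
theorem stmt_3 (μ : ℕ → ℕ) (hμ0 : μ 0 = 0) (n : ℕ) (hn : 1 ≤ n) (x : ℝ) :
    deriv (fA μ n) x = ∑ j ∈ Finset.Icc 1 n, (sigmaA μ j : ℝ) / j * fA μ (n - j) x :=
  stmt_3_general μ n x
end

section
/- Let A be a multiset of positive integers containing 1 (with multiplicity at least one). For every n ≥ 1 and every real x ≥ 1, one has f_{A,n}(x) ≤ f_{A,n+1}(x), and for x > 1 strictly f_{A,n}(x) < f_{A,n+1}(x). -/
open scoped Classical

/-!
Write `a n = fA μ n x` and `s j = σ_A(j + 1) ≥ 1`, so `(n + 1) a (n + 1) = x ∑_{j ≤ n} s j a (n - j)`.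
If `a` is nondecreasing up to `n + 1`, then `s j a (n + 1 - j) ≥ s j a (n - j) + (a (n + 1 - j) - a (n - j))`;
the differences telescope to `a (n + 1) - 1`, and the last term `s (n + 1) ≥ 1` of the recurrence for
`a (n + 2)` makes up the `1`. Hence `(n + 1 + x) a (n + 1) ≤ (n + 2) a (n + 2)`, i.e.
`(n + 2) (a (n + 2) - a (n + 1)) ≥ (x - 1) a (n + 1) ≥ 0`, which keeps the induction going.
-/

open Finset

theorem Finset.sum_range_succ_sub_reflect {G : Type*} [AddCommGroup G] (f : ℕ → G) (n : ℕ) :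
    ∑ j ∈ range (n + 1), (f (n + 1 - j) - f (n - j)) = f (n + 1) - f 0 := by
  have h := sum_range_reflect (fun i => f (i + 1) - f i) (n + 1)
  simp only [Nat.add_sub_cancel] at h
  rw [← sum_range_sub, ← h]
  refine sum_congr rfl fun j hj => ?_
  rw [Nat.sub_add_comm (Nat.le_of_lt_succ (mem_range.mp hj))]

section

variable (μ : ℕ → ℕ)

lemma one_le_sigmaA (hμ1 : 1 ≤ μ 1) {j : ℕ} (hj : j ≠ 0) : 1 ≤ sigmaA μ j :=
  calc 1 ≤ 1 * μ 1 := by rwa [one_mul]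
    _ ≤ sigmaA μ j :=
      single_le_sum (f := fun d => d * μ d) (fun _ _ => Nat.zero_le _) (Nat.one_mem_divisors.mpr hj)

variable {μ} (x : ℝ)

lemma fA_zero : fA μ 0 x = 1 := by rw [fA]

lemma succ_mul_fA_succ (n : ℕ) :
    (n + 1) * fA μ (n + 1) x
      = x * ∑ j ∈ range (n + 1), (sigmaA μ (j + 1) : ℝ) * fA μ (n - j) x := by
  rw [fA]
  field_simp

lemma fA_nonneg (hx : 0 ≤ x) (n : ℕ) : 0 ≤ fA μ n x := by
  induction n using Nat.strong_induction_on with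
  | _ n ih =>
    cases n with
    | zero => rw [fA_zero]; exact zero_le_one
    | succ m =>
      rw [fA]
      exact mul_nonneg (by positivity) <| sum_nonneg fun j _ =>
        mul_nonneg (Nat.cast_nonneg _) (ih _ (Nat.lt_succ_of_le (Nat.sub_le m j)))

lemma fA_pos (hμ1 : 1 ≤ μ 1) (hx : 0 < x) (n : ℕ) : 0 < fA μ n x := by
  cases n with
  | zero => rw [fA_zero]; exact zero_lt_one
  | succ m =>
    rw [fA]
    refine mul_pos (by positivity) (sum_pos' (fun j _ =>
      mul_nonneg (Nat.cast_nonneg _) (fA_nonneg x hx.le _)) ⟨m, self_mem_range_succ m, ?_⟩)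
    rw [Nat.sub_self, fA_zero, mul_one, Nat.cast_pos]
    exact one_le_sigmaA μ hμ1 m.succ_ne_zero

lemma fA_le_fA_succ_of_add_mul_le (hx : 1 ≤ x) {n : ℕ}
    (h : (n + x) * fA μ n x ≤ (n + 1) * fA μ (n + 1) x) : fA μ n x ≤ fA μ (n + 1) x := by
  have := fA_nonneg (μ := μ) x (by linarith) n
  nlinarith

lemma add_mul_fA_succ_le (hμ1 : 1 ≤ μ 1) (hx : 1 ≤ x) {n : ℕ}
    (hmono : ∀ m ≤ n, fA μ m x ≤ fA μ (m + 1) x) :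
    (n + 1 + x) * fA μ (n + 1) x ≤ (n + 2) * fA μ (n + 2) x := by
  set a := fun m => fA μ m x
  set s := fun j => (sigmaA μ (j + 1) : ℝ)
  have hs : ∀ j, 1 ≤ s j := fun j => by
    simpa [s] using one_le_sigmaA μ hμ1 j.succ_ne_zero
  have hterm : ∀ j ∈ range (n + 1),
      s j * a (n - j) + (a (n + 1 - j) - a (n - j)) ≤ s j * a (n + 1 - j) := fun j hj => by
    have hle : a (n - j) ≤ a (n + 1 - j) := by
      rw [Nat.sub_add_comm (Nat.le_of_lt_succ (mem_range.mp hj))]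
      exact hmono _ (Nat.sub_le n j)
    nlinarith [hs j]
  have hrec := succ_mul_fA_succ (μ := μ) x (n + 1)
  rw [sum_range_succ, Nat.sub_self, fA_zero, mul_one] at hrec
  calc (n + 1 + x) * a (n + 1)
      = x * (∑ j ∈ range (n + 1), s j * a (n - j) + (a (n + 1) - a 0) + 1) := by
        rw [show a 0 = 1 from fA_zero x]
        linear_combination succ_mul_fA_succ (μ := μ) x n
    _ ≤ x * (∑ j ∈ range (n + 1), s j * a (n + 1 - j) + s (n + 1)) := by
        rw [← sum_range_succ_sub_reflect a, ← sum_add_distrib]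
        gcongr with j hj
        · exact hterm j hj
        · exact hs (n + 1)
    _ = (n + 2) * a (n + 2) := by
        push_cast at hrec
        linear_combination -hrec

lemma add_mul_fA_le (hμ1 : 1 ≤ μ 1) (hx : 1 ≤ x) (n : ℕ) :
    (n + x) * fA μ n x ≤ (n + 1) * fA μ (n + 1) x := by
  induction n using Nat.strong_induction_on with
  | _ n ih =>
    cases n with
    | zero =>
      have hf1 : fA μ 1 x = x * μ 1 := by simp [fA_zero, sigmaA, fA]
      have : (1 : ℝ) ≤ μ 1 := by exact_mod_cast hμ1
      rw [Nat.cast_zero, fA_zero, hf1]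
      nlinarith
    | succ k =>
      rw [Nat.cast_succ, add_assoc (k : ℝ) 1 1, one_add_one_eq_two]
      exact add_mul_fA_succ_le x hμ1 hx fun m hm =>
        fA_le_fA_succ_of_add_mul_le x hx (ih m (Nat.lt_succ_of_le hm))

end

theorem stmt_4_general (μ : ℕ → ℕ) (hμ1 : 1 ≤ μ 1) (n : ℕ) (x : ℝ) (hx : 1 ≤ x) :
    fA μ n x ≤ fA μ (n + 1) x ∧ (1 < x → fA μ n x < fA μ (n + 1) x) := by
  have key := add_mul_fA_le x hμ1 hx n
  refine ⟨fA_le_fA_succ_of_add_mul_le x hx key, fun hx1 => ?_⟩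
  have hpos := fA_pos x hμ1 (by linarith) n
  nlinarith

/-- If 1 is in A then for every n >= 1 and real x >= 1, f_{A,n}(x) <= f_{A,n+1}(x), with strict inequality for x > 1. -/
theorem stmt_4 (μ : ℕ → ℕ) (hμ0 : μ 0 = 0) (hμ1 : 1 ≤ μ 1) (n : ℕ) (hn : 1 ≤ n) (x : ℝ) (hx : 1 ≤ x) :
    fA μ n x ≤ fA μ (n + 1) x ∧ (1 < x → fA μ n x < fA μ (n + 1) x) :=
  stmt_4_general μ hμ1 n x hx
end

section
/- For every set A ⊆ ℕ with 1 ∈ A and all positive integers a, b with (a,b) ≠ (1,1), the Bessenrodt–Ono inequality f_{A,a}(3)·f_{A,b}(3) > f_{A,a+b}(3) holds; moreover f_{A,1}(3)² ≥ f_{A,2}(3) with equality if and only if 2 ∈ A. -/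
open scoped Classical

/-!
The recurrence defining `f_{A,n}(x)` says that its generating series `F` solves `q F' = x σ_A F`;
since `σ` is additive in `A`, the series of a disjoint union is the product of the series.
Write `p_F(n) = f_{F,n}(3)` for a finite set `F`. Adjoining a new part size `d` multiplies the
generating series by `(1 - q^d)⁻³ = ∑ tri k q^{dk}`, so `p_{F ∪ {d}}(n) = ∑_k tri k p_F(n - dk)`.
The Bessenrodt–Ono inequality alone does not survive this step, so one carries the stronger
inequality, for `1 ≤ b ≤ a`, `2 ≤ a`,
  `p(a + b) + 3 p(b - 1) + 3 ∑_{e ∈ (a, a + b], e ∉ F} p(a + b - e) ≤ p(a) p(b)`,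
and proves it by adjoining the part sizes one at a time, starting from `F = {1}`, where every term
is an explicit polynomial in `a` and `b`.

If `a < d ≤ a + b`, the new term `3 p_F(a + b - d)` of `p_{F ∪ {d}}(a + b)` is exactly the term
`e = d` that leaves the gap sum. If `d ≤ a`, expand `p_{F ∪ {d}}(a) p_{F ∪ {d}}(b)` as the double
sum of `tri i tri j p_F(a - di) p_F(b - dj)`. Its column `i = 0` dominates, by the inequality for
`F` at `(a, b - dj)`, the terms `j ≤ b/d` of `p_{F ∪ {d}}(a + b)` together with both extra terms
for `F ∪ {d}`. Its row `j = b/d` dominates the remaining terms, by submultiplicativity of `tri`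
and of `p_F`; when the residues of `a` and `b` mod `d` add up to at least `d` there is one term
too many, which the extra term `3 p_F(b - 1)` at the residues absorbs.

Finally `f_{A,n}(3)` for `n ≤ N` only depends on `A ∩ [1, N]`.
-/

open Finset PowerSeries

namespace BessenrodtOno

theorem coeff_mul_expand {R : Type*} [CommRing R] {d : ℕ} (hd : d ≠ 0) (φ ψ : R⟦X⟧) (n : ℕ) :
    coeff n (φ * expand d hd ψ) = ∑ k ∈ range (n / d + 1), coeff k ψ * coeff (n - d * k) φ := by
  have hd0 : 0 < d := Nat.pos_of_ne_zero hd
  simp only [coeff_mul, coeff_expand, mul_ite, mul_zero]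
  rw [← sum_filter]
  refine sum_nbij' (fun p => p.2 / d) (fun k => (n - d * k, d * k)) ?_ ?_ ?_ ?_ ?_
  · intro p hp
    simp only [mem_filter, HasAntidiagonal.mem_antidiagonal] at hp
    simp only [mem_range, Nat.lt_succ_iff]
    exact Nat.div_le_div_right (by omega)
  · intro k hk
    simp only [mem_range, Nat.lt_succ_iff, Nat.le_div_iff_mul_le hd0, mul_comm k d] at hk
    simp only [mem_filter, HasAntidiagonal.mem_antidiagonal, dvd_mul_right, and_true]
    omega
  · intro p hp
    simp only [mem_filter, HasAntidiagonal.mem_antidiagonal] at hp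
    rw [Nat.mul_div_cancel' hp.2]
    ext
    · simp only; omega
    · rfl
  · intro k _
    simp [Nat.mul_div_cancel_left k hd0]
  · intro p hp
    simp only [mem_filter, HasAntidiagonal.mem_antidiagonal] at hp
    rw [Nat.mul_div_cancel' hp.2, mul_comm, ← hp.1, Nat.add_sub_cancel]

section Recurrence

variable (μ ν : ℕ → ℕ) (x : ℝ)

theorem sigmaA_zero : sigmaA μ 0 = 0 := by simp [sigmaA]

theorem sigmaA_add (j : ℕ) : sigmaA (μ + ν) j = sigmaA μ j + sigmaA ν j := by
  simp [sigmaA, mul_add, sum_add_distrib]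

theorem sigmaA_indicator_singleton (d j : ℕ) :
    sigmaA (fun e => if e = d then 1 else 0) j = if d ∣ j ∧ j ≠ 0 then d else 0 := by
  simp only [sigmaA, mul_ite, mul_one, mul_zero, sum_ite_eq', Nat.mem_divisors]

theorem fA_zero : fA μ 0 x = 1 := by rw [fA]

theorem fA_succ (n : ℕ) : fA μ (n + 1) x =
    x / (n + 1) * ∑ j ∈ range (n + 1), (sigmaA μ (j + 1) : ℝ) * fA μ (n - j) x := by
  rw [fA]

theorem fA_nonneg {x : ℝ} (hx : 0 ≤ x) (n : ℕ) : 0 ≤ fA μ n x := by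
  induction n using Nat.strong_induction_on with
  | _ n ih =>
    cases n with
    | zero => simp [fA_zero]
    | succ n =>
      rw [fA_succ]
      exact mul_nonneg (by positivity) <|
        sum_nonneg fun j _ => mul_nonneg (by positivity) (ih _ (by omega))

theorem fA_congr {μ ν : ℕ → ℕ} {N : ℕ} (h : ∀ e, 1 ≤ e → e ≤ N → μ e = ν e) :
    ∀ n ≤ N, fA μ n x = fA ν n x := by
  intro n
  induction n using Nat.strong_induction_on with
  | _ n ih =>
    cases n with
    | zero => simp [fA_zero]
    | succ n =>
      intro hn
      have hσ : ∀ j ≤ n, sigmaA μ (j + 1) = sigmaA ν (j + 1) := fun j hj =>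
        sum_congr rfl fun e he => by
          obtain ⟨hej, -⟩ := Nat.mem_divisors.1 he
          rw [h e (Nat.pos_of_dvd_of_pos hej (by omega)) ((Nat.le_of_dvd (by omega) hej).trans
            (by omega))]
      rw [fA_succ, fA_succ]
      refine congrArg _ (sum_congr rfl fun j hj => ?_)
      rw [mem_range] at hj
      rw [hσ j (by omega), ih (n - j) (by omega) (by omega)]

theorem fS_one {A : Set ℕ} (h1 : 1 ∈ A) : fS A 1 x = x := by
  simp [fS, fA_succ, fA_zero, sigmaA, h1]

theorem fS_two {A : Set ℕ} (h1 : 1 ∈ A) :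
    fS A 2 x = x / 2 * (x + 1 + 2 * if 2 ∈ A then 1 else 0) := by
  have h := fS_one x h1
  simp only [fS] at h ⊢
  rw [fA_succ, sum_range_succ, sum_range_one, Nat.sub_self, Nat.sub_zero, h, fA_zero]
  simp only [sigmaA, Nat.prime_two.divisors]
  simp [h1]
  split_ifs <;> ring

noncomputable def fASeries : ℝ⟦X⟧ := mk fun n => fA μ n x

noncomputable def sigmaSeries : ℝ⟦X⟧ := mk fun n => (sigmaA μ n : ℝ)

theorem coeff_X_mul_derivative (φ : ℝ⟦X⟧) (n : ℕ) :
    coeff n (X * d⁄dX ℝ φ) = n * coeff n φ := by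
  cases n with
  | zero => simp
  | succ n => rw [coeff_succ_X_mul, coeff_derivative]; push_cast; ring

theorem coeff_succ_sigmaSeries_mul (φ : ℝ⟦X⟧) (n : ℕ) : coeff (n + 1) (sigmaSeries μ * φ) =
    ∑ j ∈ range (n + 1), (sigmaA μ (j + 1) : ℝ) * coeff (n - j) φ := by
  rw [coeff_mul, Nat.sum_antidiagonal_succ,
    Nat.sum_antidiagonal_eq_sum_range_succ fun i j => coeff (i + 1) (sigmaSeries μ) * coeff j φ]
  simp [sigmaSeries, sigmaA_zero]

theorem X_mul_derivative_eq_iff (φ : ℝ⟦X⟧) :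
    X * d⁄dX ℝ φ = C x * sigmaSeries μ * φ ↔ ∀ n : ℕ, ((n : ℝ) + 1) * coeff (n + 1) φ =
      x * ∑ j ∈ range (n + 1), (sigmaA μ (j + 1) : ℝ) * coeff (n - j) φ := by
  rw [PowerSeries.ext_iff]
  refine ⟨fun h n => ?_, fun h n => ?_⟩
  · have := h (n + 1)
    rwa [coeff_X_mul_derivative, mul_assoc, coeff_C_mul, coeff_succ_sigmaSeries_mul,
      Nat.cast_succ] at this
  · cases n with
    | zero => simp [mul_assoc, sigmaSeries, sigmaA_zero]
    | succ n =>
      rw [coeff_X_mul_derivative, mul_assoc, coeff_C_mul, coeff_succ_sigmaSeries_mul,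
        Nat.cast_succ, h]

theorem X_mul_derivative_fASeries :
    X * d⁄dX ℝ (fASeries μ x) = C x * sigmaSeries μ * fASeries μ x := by
  rw [X_mul_derivative_eq_iff]
  intro n
  simp only [fASeries, coeff_mk, fA_succ]
  field_simp

theorem eq_fASeries {φ : ℝ⟦X⟧} (h0 : constantCoeff φ = 1)
    (h : X * d⁄dX ℝ φ = C x * sigmaSeries μ * φ) : φ = fASeries μ x := by
  rw [X_mul_derivative_eq_iff] at h
  have hf := (X_mul_derivative_eq_iff μ x _).1 (X_mul_derivative_fASeries μ x)
  ext n
  induction n using Nat.strong_induction_on with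
  | _ n ih =>
    cases n with
    | zero => simpa [fASeries, fA_zero] using h0
    | succ n =>
      apply mul_left_cancel₀ (by positivity : (n : ℝ) + 1 ≠ 0)
      rw [h, hf]
      exact congrArg _ (sum_congr rfl fun j hj => by rw [ih (n - j) (by grind)])

theorem fASeries_add : fASeries (μ + ν) x = fASeries μ x * fASeries ν x := by
  refine (eq_fASeries _ _ ?_ ?_).symm
  · simp [fASeries, fA_zero]
  · have hσ : sigmaSeries (μ + ν) = sigmaSeries μ + sigmaSeries ν := by
      ext n; simp [sigmaSeries, sigmaA_add]
    rw [Derivation.leibniz, hσ, smul_eq_mul, smul_eq_mul]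
    linear_combination fASeries μ x * X_mul_derivative_fASeries ν x +
      fASeries ν x * X_mul_derivative_fASeries μ x

end Recurrence

/-- The coefficients of `(1 - q)⁻³`. -/
noncomputable def tri (k : ℕ) : ℝ := (k + 1) * (k + 2) / 2

theorem tri_zero : tri 0 = 1 := by norm_num [tri]

theorem tri_nonneg (k : ℕ) : 0 ≤ tri k := by unfold tri; positivity

theorem tri_mono : Monotone tri := fun k l h => by
  have : (k : ℝ) ≤ l := by exact_mod_cast h
  unfold tri; gcongr

theorem tri_add_le_mul (k l : ℕ) : tri (k + l) ≤ tri k * tri l := by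
  unfold tri; push_cast
  nlinarith [mul_nonneg (Nat.cast_nonneg (α := ℝ) k) (Nat.cast_nonneg (α := ℝ) l)]

theorem tri_succ_le (k : ℕ) : tri (k + 1) ≤ 3 * tri k := by
  unfold tri; push_cast; nlinarith [Nat.cast_nonneg (α := ℝ) k]

theorem sum_range_tri (m : ℕ) : ∑ k ∈ range m, tri k = m * (m + 1) * (m + 2) / 6 := by
  induction m with
  | zero => simp
  | succ m ih => rw [sum_range_succ, ih, tri]; push_cast; ring

theorem fASeries_indicator_singleton {d : ℕ} (hd : d ≠ 0) :
    fASeries (fun e => if e = d then 1 else 0) 3 = expand d hd (mk tri) := by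
  refine (eq_fASeries _ _ (by simp [tri]) ?_).symm
  ext n
  rw [coeff_X_mul_derivative, mul_assoc, coeff_C_mul, coeff_mul_expand, coeff_expand]
  simp only [coeff_mk, sigmaSeries, sigmaA_indicator_singleton, Nat.cast_ite, Nat.cast_zero]
  by_cases hn : d ∣ n
  · obtain ⟨M, rfl⟩ := hn
    have hsum : ∑ k ∈ range (M + 1),
        tri k * (if d ∣ d * M - d * k ∧ d * M - d * k ≠ 0 then (d : ℝ) else 0) =
          d * ∑ k ∈ range M, tri k := by
      rw [sum_range_succ, mul_sum, Nat.sub_self]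
      simp only [ne_eq, not_true_eq_false, and_false, if_false, mul_zero, add_zero]
      refine sum_congr rfl fun k hk => ?_
      rw [mem_range] at hk
      rw [← Nat.mul_sub, if_pos ⟨dvd_mul_right d _, Nat.mul_ne_zero hd (by omega)⟩, mul_comm]
    rw [Nat.mul_div_cancel_left M (Nat.pos_of_ne_zero hd), if_pos (dvd_mul_right d M), hsum,
      sum_range_tri, tri]
    push_cast
    ring
  · rw [if_neg hn, mul_zero, eq_comm, mul_eq_zero]
    refine Or.inr (sum_eq_zero fun k hk => ?_)
    rw [if_neg fun h => hn ?_, mul_zero]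
    have hk : d * k ≤ n := by
      rw [mem_range, Nat.lt_succ_iff, Nat.le_div_iff_mul_le (Nat.pos_of_ne_zero hd)] at hk
      linarith
    simpa [Nat.sub_add_cancel hk] using dvd_add h.1 (dvd_mul_right d k)

noncomputable def p3 (F : Finset ℕ) (n : ℕ) : ℝ := fS F n 3

noncomputable def p3Series (F : Finset ℕ) : ℝ⟦X⟧ :=
  fASeries (fun a => if a ∈ (F : Set ℕ) then 1 else 0) 3

theorem coeff_p3Series (F : Finset ℕ) (n : ℕ) : coeff n (p3Series F) = p3 F n := by
  simp [p3Series, fASeries, p3, fS]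

theorem p3Series_empty : p3Series ∅ = 1 := by
  refine (eq_fASeries _ _ (by simp) ?_).symm
  have : sigmaSeries (fun _ => 0) = 0 := by
    ext n; simp [sigmaSeries, sigmaA]
  simp [this]

theorem p3Series_insert {F : Finset ℕ} {d : ℕ} (hd : d ≠ 0) (hdF : d ∉ F) :
    p3Series (insert d F) = p3Series F * expand d hd (mk tri) := by
  have : (fun a => if a ∈ ((insert d F : Finset ℕ) : Set ℕ) then 1 else 0) =
      (fun a => if a ∈ (F : Set ℕ) then 1 else 0) + fun e => if e = d then 1 else 0 := by
    funext e
    by_cases he : e = d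
    · subst he; simp [hdF]
    · simp [he]
  rw [p3Series, this, fASeries_add, fASeries_indicator_singleton hd, p3Series]

theorem p3_insert {F : Finset ℕ} {d : ℕ} (hd : d ≠ 0) (hdF : d ∉ F) (n : ℕ) :
    p3 (insert d F) n = ∑ k ∈ range (n / d + 1), tri k * p3 F (n - d * k) := by
  simp only [← coeff_p3Series, p3Series_insert hd hdF, coeff_mul_expand, coeff_mk]

theorem p3_insert_of_lt {F : Finset ℕ} {d n : ℕ} (hdF : d ∉ F) (hn : n < d) :
    p3 (insert d F) n = p3 F n := by
  rw [p3_insert (by omega) hdF, Nat.div_eq_of_lt hn]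
  simp [tri_zero]

theorem p3_singleton_one (n : ℕ) : p3 {1} n = tri n := by
  rw [← coeff_p3Series, ← insert_empty, p3Series_insert one_ne_zero (notMem_empty 1),
    p3Series_empty, one_mul, expand_one_apply, coeff_mk]

theorem p3_zero (F : Finset ℕ) : p3 F 0 = 1 := fA_zero _ _

theorem p3_nonneg (F : Finset ℕ) (n : ℕ) : 0 ≤ p3 F n := fA_nonneg _ (by norm_num) n

theorem p3_one {F : Finset ℕ} (h1 : 1 ∈ F) : p3 F 1 = 3 := fS_one 3 (by simpa using h1)

theorem p3_two {F : Finset ℕ} (h1 : 1 ∈ F) : p3 F 2 = if 2 ∈ F then 9 else 6 := by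
  rw [p3, fS_two 3 (by simpa using h1)]
  split_ifs <;> simp_all <;> norm_num

theorem p3_monotone {F : Finset ℕ} (h1 : 1 ∈ F) : Monotone (p3 F) := by
  have hF : p3Series F = p3Series (F.erase 1) * mk tri := by
    rw [← expand_one_apply (mk tri), ← p3Series_insert one_ne_zero (notMem_erase 1 F),
      insert_erase h1]
  refine monotone_nat_of_le_succ fun n => ?_
  simp only [← coeff_p3Series, hF, coeff_mul, Nat.sum_antidiagonal_succ', coeff_mk]
  have := sum_le_sum fun (p : ℕ × ℕ) (_ : p ∈ antidiagonal n) =>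
    mul_le_mul_of_nonneg_left (tri_mono p.2.le_succ) (p3_nonneg (F.erase 1) p.1)
  have := mul_nonneg (p3_nonneg (F.erase 1) (n + 1)) (tri_nonneg 0)
  simp only [coeff_p3Series] at *
  linarith

theorem one_le_p3 {F : Finset ℕ} (h1 : 1 ∈ F) (n : ℕ) : 1 ≤ p3 F n :=
  p3_zero F ▸ p3_monotone h1 n.zero_le

noncomputable def gapSum (F : Finset ℕ) (a b : ℕ) : ℝ :=
  ∑ e ∈ (Icc (a + 1) (a + b)).filter (· ∉ F), p3 F (a + b - e)

theorem gapSum_nonneg (F : Finset ℕ) (a b : ℕ) : 0 ≤ gapSum F a b :=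
  sum_nonneg fun _ _ => p3_nonneg F _

theorem gapSum_zero_right (F : Finset ℕ) (a : ℕ) : gapSum F a 0 = 0 := by
  simp [gapSum]

def StrongBO (F : Finset ℕ) : Prop :=
  ∀ a b, 1 ≤ b → b ≤ a → 2 ≤ a →
    p3 F (a + b) + 3 * p3 F (b - 1) + 3 * gapSum F a b ≤ p3 F a * p3 F b

theorem gapSum_singleton_one {a : ℕ} (ha : 1 ≤ a) (b : ℕ) :
    gapSum {1} a b = b * (b + 1) * (b + 2) / 6 := by
  rw [gapSum, filter_true_of_mem fun e he => by simp at he ⊢; omega, ← Ico_add_one_right_eq_Icc,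
    sum_Ico_eq_sum_range, show a + b + 1 - (a + 1) = b by omega, ← sum_range_tri,
    ← sum_range_reflect]
  refine sum_congr rfl fun i hi => ?_
  rw [mem_range] at hi
  rw [p3_singleton_one]
  congr 1
  omega

theorem strongBO_singleton_one : StrongBO {1} := by
  intro a b hb hba ha
  obtain ⟨c, rfl⟩ : ∃ c, b = c + 1 := ⟨b - 1, by omega⟩
  simp only [p3_singleton_one, gapSum_singleton_one (by omega : 1 ≤ a), Nat.add_sub_cancel, tri]
  have hA : (0 : ℝ) ≤ a - 2 := by rw [sub_nonneg]; exact_mod_cast ha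
  have hAC : (0 : ℝ) ≤ a - c - 1 := by
    rw [sub_sub, sub_nonneg]; exact_mod_cast hba
  -- four times the difference of the two sides
  have key : 0 ≤ ((c : ℝ) + 1) *
      ((c + 4) * (a * (a - c - 1) + (c + 1) * (a - 2)) + (3 * c + 8) * (a - 2)) := by
    have ha0 : (0 : ℝ) ≤ a := by linarith
    exact mul_nonneg (by positivity) <| add_nonneg
      (mul_nonneg (by positivity) (add_nonneg (mul_nonneg ha0 hAC) (mul_nonneg (by positivity) hA)))
      (mul_nonneg (by positivity) hA)
  push_cast
  linarith

section Step

variable {F : Finset ℕ} {d : ℕ}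

theorem p3_add_le_mul (hF : StrongBO F) (h1 : 1 ∈ F) (α β : ℕ) :
    p3 F (α + β) ≤ p3 F α * p3 F β := by
  wlog hβα : β ≤ α generalizing α β
  · rw [add_comm α β, mul_comm (p3 F α)]; exact this β α (by omega)
  rcases Nat.eq_zero_or_pos β with rfl | hβ
  · simp [p3_zero]
  by_cases hα : α = 1
  · obtain ⟨rfl, rfl⟩ : α = 1 ∧ β = 1 := ⟨hα, by omega⟩
    rw [p3_one h1, p3_two h1]
    split_ifs <;> norm_num
  · nlinarith [hF α β hβ hβα (by omega), gapSum_nonneg F α β, p3_nonneg F (β - 1)]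

theorem p3_add_add_three_mul_le (hF : StrongBO F) (h1 : 1 ∈ F) (hdF : d ∉ F) {α β : ℕ}
    (hα : 1 ≤ α) (hβ : 1 ≤ β) (hαd : α < d) (hβd : β < d) (hd : d ≤ α + β) :
    p3 F (α + β) + 3 * p3 F (α + β - d) ≤ p3 F α * p3 F β := by
  wlog hβα : β ≤ α generalizing α β
  · rw [add_comm α β, mul_comm (p3 F α)]; exact this hβ hα hβd hαd (by omega) (by omega)
  by_cases hα1 : α = 1
  · obtain ⟨rfl, rfl, rfl⟩ : α = 1 ∧ β = 1 ∧ d = 2 := ⟨hα1, by omega, by omega⟩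
    rw [p3_one h1, p3_two h1, if_neg hdF, Nat.sub_self, p3_zero]
    norm_num
  · have := p3_monotone h1 (show α + β - d ≤ β - 1 by omega)
    nlinarith [hF α β hβ hβα (by omega), gapSum_nonneg F α β]

theorem p3_insert_add_gapSum_insert_of_lt (hdF : d ∉ F) {a b : ℕ} (hba : b ≤ a) (had : a < d) :
    p3 (insert d F) (a + b) + 3 * gapSum (insert d F) a b = p3 F (a + b) + 3 * gapSum F a b := by
  set S := (Icc (a + 1) (a + b)).filter (· ∉ F)
  have hS : (Icc (a + 1) (a + b)).filter (· ∉ insert d F) = S.erase d := by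
    ext e; simp only [S, mem_filter, mem_erase, mem_insert]; tauto
  have hgap : gapSum (insert d F) a b = ∑ e ∈ S.erase d, p3 F (a + b - e) := by
    rw [gapSum, hS]
    exact sum_congr rfl fun e he => p3_insert_of_lt hdF (by simp [S] at he; omega)
  rw [hgap, gapSum]
  by_cases hdab : d ≤ a + b
  · have hdS : d ∈ S := by simp [S, hdF]; omega
    rw [← add_sum_erase S _ hdS, p3_insert (by omega) hdF,
      Nat.div_eq_of_lt_le (k := 1) (by omega) (by omega), sum_range_succ, sum_range_one]
    simp [tri]
    ring
  · rw [erase_eq_of_notMem (by simp [S]; omega), p3_insert_of_lt hdF (by omega)]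

theorem gapSum_insert (hd : d ≠ 0) (hdF : d ∉ F) {a b : ℕ} (hda : d ≤ a) :
    gapSum (insert d F) a b = ∑ j ∈ range (b / d + 1), tri j * gapSum F a (b - d * j) := by
  have hS : (Icc (a + 1) (a + b)).filter (· ∉ insert d F) =
      (Icc (a + 1) (a + b)).filter (· ∉ F) :=
    filter_congr fun e he => by simp at he ⊢; omega
  simp only [gapSum, hS, p3_insert hd hdF, mul_sum]
  rw [sum_comm' (t' := range (b / d + 1))
    (s' := fun j => (Icc (a + 1) (a + (b - d * j))).filter (· ∉ F)) fun e j => ?_]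
  · refine sum_congr rfl fun j _ => sum_congr rfl fun e he => ?_
    simp only [mem_filter, mem_Icc] at he
    congr 2
    omega
  · simp only [mem_filter, mem_Icc, mem_range, Nat.lt_succ_iff,
      Nat.le_div_iff_mul_le (Nat.pos_of_ne_zero hd), mul_comm _ d]
    constructor <;> rintro ⟨⟨⟨h1, h2⟩, h3⟩, h4⟩ <;> exact ⟨⟨⟨h1, by omega⟩, h3⟩, by omega⟩

theorem column_bound (hF : StrongBO F) (hdF : d ∉ F) (hd : 2 ≤ d) {a b : ℕ} (hda : d ≤ a)
    (hb : 1 ≤ b) (hba : b ≤ a) :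
    ∑ j ∈ range (b / d + 1), tri j * p3 F (a + b - d * j) + 3 * p3 (insert d F) (b - 1)
      + 3 * gapSum (insert d F) a b ≤ p3 F a * p3 (insert d F) b := by
  have hd0 : 0 < d := by omega
  have hrange : (range (b / d + 1)).filter (fun j => d * j < b) = range ((b - 1) / d + 1) := by
    ext j
    simp only [mem_filter, mem_range, Nat.lt_succ_iff, Nat.le_div_iff_mul_le hd0, mul_comm j d]
    omega
  rw [gapSum_insert (by omega) hdF hda, p3_insert (by omega) hdF (b - 1),
    p3_insert (by omega) hdF b, ← hrange, sum_filter, mul_sum, mul_sum, mul_sum,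
    ← sum_add_distrib, ← sum_add_distrib]
  refine sum_le_sum fun j hj => ?_
  rw [mem_range, Nat.lt_succ_iff, Nat.le_div_iff_mul_le hd0, mul_comm j d] at hj
  split_ifs with hjb
  · have h := hF a (b - d * j) (by omega) (by omega) (by omega)
    rw [show a + (b - d * j) = a + b - d * j by omega,
      show b - d * j - 1 = b - 1 - d * j by omega] at h
    nlinarith [mul_le_mul_of_nonneg_left h (tri_nonneg j)]
  · rw [show b - d * j = 0 by omega, show a + b - d * j = a by omega, gapSum_zero_right, p3_zero]
    linarith

theorem sum_range_succ_succ_le {t u : ℕ → ℝ} {n : ℕ} (h : ∀ i < n, t i ≤ u i)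
    (hn : t n + t (n + 1) ≤ u n) : ∑ i ∈ range (n + 2), t i ≤ ∑ i ∈ range (n + 1), u i := by
  rw [sum_range_succ, sum_range_succ, sum_range_succ]
  linarith [sum_le_sum fun i hi => h i (mem_range.1 hi)]

theorem tri_mul_p3_add_tri_succ_mul_p3_le (hF : StrongBO F) (h1 : 1 ∈ F) (hdF : d ∉ F)
    {α β : ℕ} (hαd : α < d) (hβd : β < d) (hd : d ≤ α + β) (I J : ℕ) :
    tri (I + J) * p3 F (α + β) + tri (I + J + 1) * p3 F (α + β - d) ≤
      tri I * p3 F α * (tri J * p3 F β) := by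
  have h3 := p3_add_add_three_mul_le hF h1 hdF (by omega) (by omega) hαd hβd hd
  have := mul_le_mul_of_nonneg_right (tri_succ_le (I + J)) (p3_nonneg F (α + β - d))
  have := mul_le_mul_of_nonneg_right (tri_add_le_mul I J)
    (mul_nonneg (p3_nonneg F α) (p3_nonneg F β))
  nlinarith [mul_le_mul_of_nonneg_left h3 (tri_nonneg (I + J))]

theorem row_bound (hF : StrongBO F) (h1 : 1 ∈ F) (hdF : d ∉ F) (hd0 : 0 < d) {a b : ℕ}
    (hda : d ≤ a) :
    ∑ i ∈ range ((a + b) / d - b / d), tri (b / d + 1 + i) * p3 F (a + b - d * (b / d + 1 + i))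
      ≤ (∑ i ∈ range (a / d), tri (i + 1) * p3 F (a - d * (i + 1))) *
        (tri (b / d) * p3 F (b % d)) := by
  set I := a / d
  set J := b / d
  have ha : d * I + a % d = a := Nat.div_add_mod a d
  have hb : d * J + b % d = b := Nat.div_add_mod b d
  have hI : 1 ≤ I := (Nat.one_le_div_iff hd0).2 hda
  have hterm : ∀ i < I, tri (J + 1 + i) * p3 F (a + b - d * (J + 1 + i))
      ≤ tri (i + 1) * p3 F (a - d * (i + 1)) * (tri J * p3 F (b % d)) := by
    intro i hi
    have hle : d * (i + 1) ≤ d * I := Nat.mul_le_mul_left d (by omega)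
    rw [show J + 1 + i = (i + 1) + J by ring,
      show a + b - d * (i + 1 + J) = (a - d * (i + 1)) + b % d by rw [mul_add]; omega]
    calc tri (i + 1 + J) * p3 F (a - d * (i + 1) + b % d)
        ≤ (tri (i + 1) * tri J) * (p3 F (a - d * (i + 1)) * p3 F (b % d)) :=
          mul_le_mul (tri_add_le_mul _ _) (p3_add_le_mul hF h1 _ _) (p3_nonneg _ _)
            (mul_nonneg (tri_nonneg _) (tri_nonneg _))
      _ = _ := by ring
  rw [Nat.add_div hd0, sum_mul]
  split_ifs with hover
  · obtain ⟨I', hI'⟩ : ∃ I', I = I' + 1 := ⟨I - 1, by omega⟩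
    rw [show I + J + 1 - J = I' + 2 by omega, hI']
    refine sum_range_succ_succ_le (fun i hi => hterm i (by omega)) ?_
    have hmul : d * (J + 1 + (I' + 1)) = d * I + d * J + d := by rw [hI']; ring
    rw [show J + 1 + I' = I + J by omega,
      show a + b - d * (I + J) = a % d + b % d by rw [mul_add]; omega, hmul,
      show a + b - (d * I + d * J + d) = a % d + b % d - d by omega,
      show a - d * (I' + 1) = a % d by rw [← hI']; omega, ← hI', show J + 1 + I = I + J + 1 by ring]
    exact tri_mul_p3_add_tri_succ_mul_p3_le hF h1 hdF (Nat.mod_lt a hd0) (Nat.mod_lt b hd0)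
      hover I J
  · rw [show I + J + 0 - J = I by omega]
    exact sum_le_sum fun i hi => hterm i (mem_range.1 hi)

theorem strongBO_insert (hF : StrongBO F) (h1 : 1 ∈ F) (hdF : d ∉ F) (hd : 2 ≤ d) :
    StrongBO (insert d F) := by
  intro a b hb hba ha
  rcases lt_or_ge a d with had | hda
  · rw [p3_insert_of_lt hdF had, p3_insert_of_lt hdF (by omega : b < d),
      p3_insert_of_lt hdF (by omega : b - 1 < d)]
    linarith [p3_insert_add_gapSum_insert_of_lt hdF hba had, hF a b hb hba ha]
  have hd0 : 0 < d := by omega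
  have hsplit : p3 (insert d F) (a + b) =
      ∑ j ∈ range (b / d + 1), tri j * p3 F (a + b - d * j) +
        ∑ i ∈ range ((a + b) / d - b / d),
          tri (b / d + 1 + i) * p3 F (a + b - d * (b / d + 1 + i)) := by
    have : b / d ≤ (a + b) / d := Nat.div_le_div_right (by omega)
    rw [p3_insert (by omega) hdF, ← sum_range_add,
      show b / d + 1 + ((a + b) / d - b / d) = (a + b) / d + 1 by omega]
  have hga : p3 (insert d F) a =
      p3 F a + ∑ i ∈ range (a / d), tri (i + 1) * p3 F (a - d * (i + 1)) := by
    rw [p3_insert (by omega) hdF, sum_range_succ']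
    simp [tri_zero, add_comm]
  have hgb : tri (b / d) * p3 F (b % d) ≤ p3 (insert d F) b := by
    rw [p3_insert (by omega) hdF, Nat.mod_eq_sub_mul_div]
    exact single_le_sum (f := fun j => tri j * p3 F (b - d * j))
      (fun j _ => mul_nonneg (tri_nonneg j) (p3_nonneg F _)) (self_mem_range_succ _)
  have hrest : 0 ≤ ∑ i ∈ range (a / d), tri (i + 1) * p3 F (a - d * (i + 1)) :=
    sum_nonneg fun i _ => mul_nonneg (tri_nonneg _) (p3_nonneg F _)
  rw [hsplit, hga, add_mul]
  linarith [column_bound hF hdF hd hda hb hba, row_bound (b := b) hF h1 hdF hd0 hda,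
    mul_le_mul_of_nonneg_left hgb hrest]

end Step

theorem strongBO_of_one_mem {F : Finset ℕ} (h1 : 1 ∈ F) (h0 : 0 ∉ F) : StrongBO F := by
  suffices ∀ G : Finset ℕ, 1 ∉ G → 0 ∉ G → StrongBO (insert 1 G) by
    simpa [insert_erase h1] using this _ (notMem_erase 1 F) fun h => h0 (mem_of_mem_erase h)
  intro G
  induction G using Finset.induction_on with
  | empty => simpa using strongBO_singleton_one
  | insert d G hdG ih =>
    intro h1G h0G
    simp only [mem_insert, not_or] at h1G h0G
    rw [insert_comm]
    refine strongBO_insert (ih h1G.2 h0G.2) (mem_insert_self 1 G) ?_ (by omega)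
    simp only [mem_insert, not_or]
    exact ⟨by omega, hdG⟩

end BessenrodtOno

open BessenrodtOno

theorem stmt_11_general (A : Set ℕ) (h1 : 1 ∈ A) :
    (∀ a b : ℕ, 1 ≤ a → 1 ≤ b → ¬(a = 1 ∧ b = 1) →
      fS A a 3 * fS A b 3 > fS A (a + b) 3) ∧
    fS A 1 3 * fS A 1 3 ≥ fS A 2 3 ∧
    (fS A 1 3 * fS A 1 3 = fS A 2 3 ↔ 2 ∈ A) := by
  refine ⟨fun a b ha hb hab => ?_, ?_, ?_⟩
  · wlog hba : b ≤ a generalizing a b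
    · rw [mul_comm, add_comm]; exact this b a hb ha (by tauto) (by omega)
    set G := (Icc 1 (a + b)).filter (· ∈ A)
    have hG : ∀ n ≤ a + b, fS A n 3 = p3 G n :=
      fA_congr 3 fun e he1 he2 => by simp [G, he1, he2]
    have h1G : 1 ∈ G := by simp [G, h1]; omega
    have hBO := strongBO_of_one_mem h1G (by simp [G]) a b hb hba (by omega)
    rw [hG a (by omega), hG b (by omega), hG (a + b) le_rfl]
    nlinarith [gapSum_nonneg G a b, one_le_p3 h1G (b - 1)]
  · rw [fS_one 3 h1, fS_two 3 h1]; split_ifs <;> norm_num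
  · rw [fS_one 3 h1, fS_two 3 h1]; split_ifs <;> norm_num [*]

/-- Bessenrodt-Ono inequality at x = 3 for a set A of positive integers with 1 in A: f_{A,a}(3) f_{A,b}(3) > f_{A,a+b}(3) for all a, b >= 1 with (a,b) != (1,1), and f_{A,1}(3)^2 >= f_{A,2}(3) with equality iff 2 in A. -/
theorem stmt_11 (A : Set ℕ) (h0 : 0 ∉ A) (h1 : 1 ∈ A) :
    (∀ a b : ℕ, 1 ≤ a → 1 ≤ b → ¬(a = 1 ∧ b = 1) →
      fS A a 3 * fS A b 3 > fS A (a + b) 3) ∧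
    fS A 1 3 * fS A 1 3 ≥ fS A 2 3 ∧
    (fS A 1 3 * fS A 1 3 = fS A 2 3 ↔ 2 ∈ A) :=
  stmt_11_general A h1
end

section
/- The function Ψ(x) = (x+1)(x+2) − 4x(1 + ln(2x)) is non-negative for all real x ≥ 15. -/
/-!
By concavity, `log` lies below its tangent line at `30`, so `log (2x) ≤ log 30 + x/15 - 1`.
Together with `log 30 < 7/2` this gives `Ψ(x) ≥ (11/15) x (x - 15) + 2`, which is positive for
`x ≥ 15`.
-/

namespace Real

theorem log_le_log_add_div_sub_one {a y : ℝ} (ha : 0 < a) (hy : 0 < y) :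
    log y ≤ log a + y / a - 1 := by
  have h := log_le_sub_one_of_pos (div_pos hy ha)
  rw [log_div hy.ne' ha.ne'] at h
  linarith

theorem log_thirty_lt : log 30 < 7 / 2 := by
  rw [log_lt_iff_lt_exp (by norm_num)]
  have hexp7 : exp (7 / 2) ^ 2 = exp 1 ^ 7 := by
    rw [← exp_nat_mul, ← exp_nat_mul]; norm_num
  have hsq : (30 : ℝ) ^ 2 < exp (7 / 2) ^ 2 := by
    rw [hexp7]
    calc (30 : ℝ) ^ 2 < 2.7182818283 ^ 7 := by norm_num
      _ < exp 1 ^ 7 := by gcongr; exact exp_one_gt_d9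
  exact lt_of_pow_lt_pow_left₀ 2 (exp_pos _).le hsq

end Real

/-- `Ψ(x) = (x+1)(x+2) − 4x(1 + ln(2x))` is non-negative for all real `x ≥ 15`. -/
theorem stmt_14 (x : ℝ) (hx : 15 ≤ x) :
    0 ≤ (x + 1) * (x + 2) - 4 * x * (1 + Real.log (2 * x)) := by
  have hx₀ : 0 < x := by linarith
  have htangent : Real.log (2 * x) ≤ Real.log 30 + 2 * x / 30 - 1 :=
    Real.log_le_log_add_div_sub_one (by norm_num) (by positivity)
  have hbound : Real.log (2 * x) ≤ 5 / 2 + x / 15 := by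
    linarith [Real.log_thirty_lt]
  have hquad : 0 ≤ 11 / 15 * x * (x - 15) + 2 := by nlinarith
  linarith [mul_le_mul_of_nonneg_left hbound hx₀.le]
end
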